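/- For every t ≥ 1, the probability of c at time t with respect to the dynamic knowledge base K = ((μ, T), 𝕊) satisfies P_K(c[t]) = Σ over worlds W with O_W ⊨ c of μ_t(W). -/

import Mathlib

open scoped ENNReal

namespace BL

variable {I A C V : Type*}

/-- A world `W` satisfies the context `κ` if it agrees with `κ` wherever it is defined. -/
def SatCtx (W : V → Bool) (κ : V → Option Bool) : Prop :=
  ∀ v b, κ v = some b → W v = b

/-- The ontology induced by the world `W` from the `V`-ontology `𝕊`. -/
def OW (𝕊 : Finset (A × (V → Option Bool))) (W : V → Bool) : Set A :=
  {α | ∃ κ, (α, κ) ∈ 𝕊 ∧ SatCtx W κ}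

/-- `i` is a model of the ontology `O`. -/
def IsOntModel (satA : I → A → Prop) (O : Set A) (i : I) : Prop :=
  ∀ α ∈ O, satA i α

/-- The ontology `O` entails the consequence `c`. -/
def Entails (satA : I → A → Prop) (satC : I → C → Prop) (O : Set A) (c : C) : Prop :=
  ∀ i : I, IsOntModel satA O i → satC i c

/-- A probabilistic interpretation `p` (a finitely supported PMF on pairs of an
interpretation and a world) is a model of the knowledge base `(PB, 𝕊)`. -/
def IsKBModel (satA : I → A → Prop) (PB : PMF (V → Bool))
    (𝕊 : Finset (A × (V → Option Bool))) (p : PMF (I × (V → Bool))) : Prop :=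
  p.support.Finite ∧
    (∀ iW ∈ p.support, IsOntModel satA (OW 𝕊 iW.2) iW.1) ∧
    ∀ W : V → Bool, ∑' i : I, p (i, W) = PB W

/-- `P_p(c)`: the probability of the consequence `c` w.r.t. `p`. -/
noncomputable def Pp (satC : I → C → Prop) (p : PMF (I × (V → Bool))) (c : C) : ℝ≥0∞ :=
  ∑' iW : I × (V → Bool), {x : I × (V → Bool) | satC x.1 c}.indicator (⇑p) iW

/-- `P_K(c)`: the infimum of `P_p(c)` over all models `p` of the knowledge base. -/
noncomputable def PK (satA : I → A → Prop) (satC : I → C → Prop) (PB : PMF (V → Bool))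
    (𝕊 : Finset (A × (V → Option Bool))) (c : C) : ℝ≥0∞ :=
  sInf {x : ℝ≥0∞ | ∃ p : PMF (I × (V → Bool)), IsKBModel satA PB 𝕊 p ∧ x = Pp satC p c}

/-- The `t`-th marginal of the DBN `(μ, T)` (0-indexed: `marg μ T 0 = μ_1 = μ`,
and `marg μ T n = μ_{n+1}` with `μ_{t+1}(W') = Σ_W μ_t(W)·T(W)(W')`). -/
noncomputable def marg (μ : PMF (V → Bool)) (T : (V → Bool) → PMF (V → Bool)) :
    ℕ → PMF (V → Bool)
  | 0 => μ
  | n + 1 => (marg μ T n).bind T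

/-- A timed probabilistic interpretation `(p_t)_{t ≥ 1}` is a model of the dynamic
knowledge base `((μ, T), 𝕊)` if for every `t ≥ 1`, `p t` is a model of `(μ_t, 𝕊)`. -/
def IsTimedModel (satA : I → A → Prop) (μ : PMF (V → Bool))
    (T : (V → Bool) → PMF (V → Bool)) (𝕊 : Finset (A × (V → Option Bool)))
    (p : ℕ → PMF (I × (V → Bool))) : Prop :=
  ∀ t : ℕ, 1 ≤ t → IsKBModel satA (marg μ T (t - 1)) 𝕊 (p t)

/-- `P_K(c[t])`: the infimum of `P_{p_t}(c)` over all timed models of the dynamic KB. -/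
noncomputable def PKtime (satA : I → A → Prop) (satC : I → C → Prop)
    (μ : PMF (V → Bool)) (T : (V → Bool) → PMF (V → Bool))
    (𝕊 : Finset (A × (V → Option Bool))) (c : C) (t : ℕ) : ℝ≥0∞ :=
  sInf {x : ℝ≥0∞ | ∃ p : ℕ → PMF (I × (V → Bool)),
    IsTimedModel satA μ T 𝕊 p ∧ x = Pp satC (p t) c}

/-!
Every model `p` of `(μ_t, 𝕊)` puts its mass over a world `W` on models of `O_W`, so whenever
`O_W ⊨ c` all of that mass, namely `μ_t(W)`, counts towards `P_p(c)`; hence the sum is a lower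
bound. It is attained by the model that, in each world `W`, puts all of `μ_t(W)` on a single
model of `O_W` which fails `c` unless `O_W ⊨ c`. Such a model exists for every `t`, so these
models form a timed model of `K`.
-/

theorem tsum_apply_left_eq_map_snd {α β : Type*} (p : PMF (α × β)) (b : β) :
    ∑' a, p (a, b) = p.map Prod.snd b := by
  rw [PMF.map_apply, ENNReal.tsum_prod']
  exact tsum_congr fun a => by simp

theorem Pp_eq_toOuterMeasure (satC : I → C → Prop) (p : PMF (I × (V → Bool))) (c : C) :
    Pp satC p c = p.toOuterMeasure {x | satC x.1 c} :=
  (p.toOuterMeasure_apply _).symm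

theorem tsum_indicator_entails_le_Pp {satA : I → A → Prop} {PB : PMF (V → Bool)}
    {𝕊 : Finset (A × (V → Option Bool))} {p : PMF (I × (V → Bool))}
    (hp : IsKBModel satA PB 𝕊 p) (satC : I → C → Prop) (c : C) :
    ∑' W, {W | Entails satA satC (OW 𝕊 W) c}.indicator PB W ≤ Pp satC p c := by
  obtain ⟨-, hmodels, hmarg⟩ := hp
  have hPB : p.map Prod.snd = PB := PMF.ext fun W => by
    rw [← tsum_apply_left_eq_map_snd, hmarg]
  rw [← PB.toOuterMeasure_apply, ← hPB, PMF.toOuterMeasure_map_apply, Pp_eq_toOuterMeasure]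
  exact p.toOuterMeasure_mono fun iW ⟨hE, hsupp⟩ => hE iW.1 (hmodels iW hsupp)

theorem exists_isOntModel_satC_iff_entails {satA : I → A → Prop} {O : Set A}
    (hO : ∃ i, IsOntModel satA O i) (satC : I → C → Prop) (c : C) :
    ∃ i, IsOntModel satA O i ∧ (satC i c ↔ Entails satA satC O c) := by
  by_cases hE : Entails satA satC O c
  · obtain ⟨i, hi⟩ := hO
    exact ⟨i, hi, iff_of_true (hE i hi) hE⟩
  · obtain ⟨i, hi, hc⟩ : ∃ i, IsOntModel satA O i ∧ ¬ satC i c := by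
      simpa [Entails] using hE
    exact ⟨i, hi, iff_of_false hc hE⟩

theorem isKBModel_map_graph [Finite V] {satA : I → A → Prop}
    {𝕊 : Finset (A × (V → Option Bool))} (m : PMF (V → Bool)) {g : (V → Bool) → I}
    (hg : ∀ W, IsOntModel satA (OW 𝕊 W) (g W)) :
    IsKBModel satA m 𝕊 (m.map fun W => (g W, W)) := by
  refine ⟨?_, ?_, fun W => ?_⟩
  · rw [PMF.support_map]
    exact (Set.toFinite _).image _
  · rintro _ hiW
    rw [PMF.support_map] at hiW
    obtain ⟨W, -, rfl⟩ := hiW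
    exact hg W
  · rw [tsum_apply_left_eq_map_snd, PMF.map_comp]
    exact congrArg (· W) m.map_id

theorem Pp_map_graph (satC : I → C → Prop) (m : PMF (V → Bool)) (g : (V → Bool) → I) (c : C) :
    Pp satC (m.map fun W => (g W, W)) c = ∑' W, {W | satC (g W) c}.indicator m W := by
  rw [Pp_eq_toOuterMeasure, PMF.toOuterMeasure_map_apply, PMF.toOuterMeasure_apply]
  rfl

theorem exists_isKBModel_Pp_eq [Finite V] {satA : I → A → Prop}
    {𝕊 : Finset (A × (V → Option Bool))} (hmod : ∀ W, ∃ i, IsOntModel satA (OW 𝕊 W) i)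
    (satC : I → C → Prop) (c : C) (m : PMF (V → Bool)) :
    ∃ p, IsKBModel satA m 𝕊 p ∧
      Pp satC p c = ∑' W, {W | Entails satA satC (OW 𝕊 W) c}.indicator m W := by
  choose g hg hgc using fun W => exists_isOntModel_satC_iff_entails (hmod W) satC c
  refine ⟨_, isKBModel_map_graph m hg, ?_⟩
  rw [Pp_map_graph]
  simp only [hgc]

/-- for every `t ≥ 1`, `P_K(c[t]) = Σ_{O_W ⊨ c} μ_t(W)`. -/
theorem timed_probabilistic_entailment [Fintype V]
    (satA : I → A → Prop) (satC : I → C → Prop)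
    (μ : PMF (V → Bool)) (T : (V → Bool) → PMF (V → Bool))
    (𝕊 : Finset (A × (V → Option Bool))) (c : C) (t : ℕ) (ht : 1 ≤ t)
    (hmod : ∀ W : V → Bool, ∃ i : I, IsOntModel satA (OW 𝕊 W) i) :
    PKtime satA satC μ T 𝕊 c t
      = ∑' W : V → Bool,
          {W : V → Bool | Entails satA satC (OW 𝕊 W) c}.indicator (⇑(marg μ T (t - 1))) W := by
  apply le_antisymm
  · choose p hp hPp using exists_isKBModel_Pp_eq hmod satC c
    exact sInf_le ⟨fun s => p (marg μ T (s - 1)), fun s _ => hp _, (hPp _).symm⟩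
  · refine le_sInf ?_
    rintro x ⟨p, hp, rfl⟩
    exact tsum_indicator_entails_le_Pp (hp t ht) satC c

end BL
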